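/- arXiv:2008.03019 — 2 statements merged into one kernel-verified Lean document; each statement's English description precedes it below -/
import Mathlib

section
/- Let $g : [0,1] \to \mathbb{R}$ be continuous. Then $\lim_{\varepsilon \to 0^{+}} \varepsilon \int_{0}^{1} \frac{2\, g(r)}{r \,(1 - \log r^{2})\, \big(1 + \log(1 - \log r^{2})\big)^{1+\varepsilon}}\, dr = g(0)$. -/
open Real MeasureTheory Set Filter intervalIntegral

noncomputable def spsi (r : ℝ) : ℝ := 1 + Real.log (1 - Real.log (r ^ 2))

noncomputable def sFe (ε r : ℝ) : ℝ := if r ≤ 0 then 0 else spsi r ^ (-ε)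

noncomputable def sDe (ε r : ℝ) : ℝ :=
  ε * (2 / (r * (1 - Real.log (r ^ 2)) * spsi r ^ (1 + ε)))

lemma log_sq_nonpos {r : ℝ} (h0 : 0 < r) (h1 : r ≤ 1) : Real.log (r ^ 2) ≤ 0 :=
  Real.log_nonpos (by positivity) (by nlinarith)

lemma one_sub_log_pos {r : ℝ} (h0 : 0 < r) (h1 : r ≤ 1) : 0 < 1 - Real.log (r ^ 2) := by
  have := log_sq_nonpos h0 h1; linarith

lemma spsi_ge_one {r : ℝ} (h0 : 0 < r) (h1 : r ≤ 1) : 1 ≤ spsi r := by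
  have h := Real.log_nonneg (by have := log_sq_nonpos h0 h1; linarith :
    1 ≤ 1 - Real.log (r ^ 2))
  simpa [spsi] using h

lemma spsi_pos {r : ℝ} (h0 : 0 < r) (h1 : r ≤ 1) : 0 < spsi r :=
  lt_of_lt_of_le one_pos (spsi_ge_one h0 h1)

lemma hasDerivAt_spsi {r : ℝ} (h0 : 0 < r) (h1 : r ≤ 1) :
    HasDerivAt spsi (-(2 / r) / (1 - Real.log (r ^ 2))) r := by
  have hr2 : (0:ℝ) < r ^ 2 := by positivity
  have h1' : HasDerivAt (fun x : ℝ => x ^ 2) ((2:ℕ) * r ^ (2 - 1)) r := hasDerivAt_pow 2 r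
  have h2 : HasDerivAt (fun x : ℝ => Real.log (x ^ 2)) ((2:ℕ) * r ^ (2 - 1) / r ^ 2) r :=
    h1'.log (ne_of_gt hr2)
  have h3 : HasDerivAt (fun x : ℝ => 1 - Real.log (x ^ 2))
      (-((2:ℕ) * r ^ (2 - 1) / r ^ 2)) r := h2.const_sub 1
  have h4 := (h3.log (ne_of_gt (one_sub_log_pos h0 h1))).const_add 1
  have : -((2:ℕ) * r ^ (2 - 1) / r ^ 2) / (1 - Real.log (r ^ 2))
      = -(2 / r) / (1 - Real.log (r ^ 2)) := by
    have : ((2:ℕ) : ℝ) * r ^ (2 - 1) / r ^ 2 = 2 / r := by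
      field_simp; ring
    rw [this]
  rw [← this]
  exact h4

lemma hasDerivAt_sFe {ε r : ℝ} (h0 : 0 < r) (h1 : r ≤ 1) :
    HasDerivAt (sFe ε) (sDe ε r) r := by
  have hψ := spsi_pos h0 h1
  have h5 : HasDerivAt (fun x => spsi x ^ (-ε))
      (-(2 / r) / (1 - Real.log (r ^ 2)) * (-ε) * spsi r ^ (-ε - 1)) r :=
    (hasDerivAt_spsi h0 h1).rpow_const (Or.inl (ne_of_gt hψ))
  have heq : sFe ε =ᶠ[nhds r] fun x => spsi x ^ (-ε) := by
    filter_upwards [Ioi_mem_nhds h0] with x hx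
    simp [sFe, not_le.mpr (mem_Ioi.mp hx)]
  have h6 : HasDerivAt (sFe ε)
      (-(2 / r) / (1 - Real.log (r ^ 2)) * (-ε) * spsi r ^ (-ε - 1)) r :=
    h5.congr_of_eventuallyEq heq
  have hval : -(2 / r) / (1 - Real.log (r ^ 2)) * (-ε) * spsi r ^ (-ε - 1) = sDe ε r := by
    have h7 : spsi r ^ (-ε - 1) = (spsi r ^ (1 + ε))⁻¹ := by
      rw [show (-ε - 1 : ℝ) = -(1 + ε) by ring, Real.rpow_neg hψ.le]
    rw [h7, sDe]
    have hst : spsi r ^ (1 + ε) ≠ 0 := ne_of_gt (Real.rpow_pos_of_pos hψ _)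
    have hls := ne_of_gt (one_sub_log_pos h0 h1)
    field_simp
  rw [← hval]; exact h6

lemma sDe_nonneg {ε r : ℝ} (hε : 0 ≤ ε) (h0 : 0 ≤ r) (h1 : r ≤ 1) : 0 ≤ sDe ε r := by
  rcases eq_or_lt_of_le h0 with h | h
  · simp [sDe, ← h]
  · have ha := one_sub_log_pos h h1
    have hψ : (0:ℝ) < spsi r := spsi_pos h h1
    have hb := Real.rpow_pos_of_pos (spsi_pos h h1) (1 + ε)
    have : 0 ≤ 2 / (r * (1 - Real.log (r ^ 2)) * spsi r ^ (1 + ε)) :=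
      div_nonneg (by norm_num) (mul_pos (mul_pos h ha) hb).le
    exact mul_nonneg hε this

lemma continuousOn_sDe {ε : ℝ} : ContinuousOn (sDe ε) (Ioc 0 1) := by
  apply ContinuousOn.mul continuousOn_const
  apply ContinuousOn.div continuousOn_const
  · apply ContinuousOn.mul
    · apply ContinuousOn.mul continuousOn_id
      exact continuousOn_const.sub (ContinuousOn.log (continuous_pow 2).continuousOn
        (fun x hx => pow_ne_zero 2 (ne_of_gt hx.1)))
    · apply ContinuousOn.rpow_const
      · exact continuousOn_const.add (ContinuousOn.log
          (continuousOn_const.sub (ContinuousOn.log (continuous_pow 2).continuousOn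
            (fun x hx => pow_ne_zero 2 (ne_of_gt hx.1))))
          (fun x hx => ne_of_gt (one_sub_log_pos hx.1 hx.2)))
      · exact fun x hx => Or.inl (ne_of_gt (spsi_pos hx.1 hx.2))
  · intro x hx
    have ha := one_sub_log_pos hx.1 hx.2
    have hψ : (0:ℝ) < spsi x := spsi_pos hx.1 hx.2
    have hb := Real.rpow_pos_of_pos (spsi_pos hx.1 hx.2) (1 + ε)
    exact ne_of_gt (mul_pos (mul_pos hx.1 ha) hb)

lemma tendsto_spsi_rpow {ε : ℝ} (hε : 0 < ε) :
    Tendsto (fun x => spsi x ^ (-ε)) (nhdsWithin 0 (Ioi (0:ℝ))) (nhds 0) := by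
  have t0 : Tendsto (fun x : ℝ => x ^ 2) (nhdsWithin 0 (Ioi (0:ℝ)))
      (nhdsWithin 0 (Ioi (0:ℝ))) := by
    rw [tendsto_nhdsWithin_iff]
    constructor
    · have : Tendsto (fun x : ℝ => x ^ 2) (nhds 0) (nhds 0) := by
        simpa using (continuous_pow 2).tendsto (0:ℝ)
      exact this.mono_left nhdsWithin_le_nhds
    · filter_upwards [self_mem_nhdsWithin] with x hx
      exact pow_pos (mem_Ioi.mp hx) 2
  have t1 : Tendsto (fun x : ℝ => Real.log (x ^ 2)) (nhdsWithin 0 (Ioi (0:ℝ))) atBot :=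
    Real.tendsto_log_nhdsGT_zero.comp t0
  have t2 : Tendsto (fun x : ℝ => 1 - Real.log (x ^ 2)) (nhdsWithin 0 (Ioi (0:ℝ))) atTop :=
    tendsto_atTop_add_const_left _ 1 (tendsto_neg_atBot_atTop.comp t1)
  have t3 : Tendsto spsi (nhdsWithin 0 (Ioi (0:ℝ))) atTop :=
    tendsto_atTop_add_const_left _ 1 (Real.tendsto_log_atTop.comp t2)
  exact (tendsto_rpow_neg_atTop hε).comp t3

lemma continuousOn_sFe {ε : ℝ} (hε : 0 < ε) : ContinuousOn (sFe ε) (Icc 0 1) := by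
  intro r hr
  rcases eq_or_lt_of_le hr.1 with h | h
  · rw [← continuousWithinAt_diff_self]
    have hsub : Icc (0:ℝ) 1 \ {r} ⊆ Ioi 0 := by
      intro x hx
      rcases hx with ⟨hx1, hx2⟩
      have hne : x ≠ 0 := by simpa [← h] using hx2
      exact lt_of_le_of_ne hx1.1 (Ne.symm hne)
    refine ContinuousWithinAt.mono ?_ hsub
    · unfold ContinuousWithinAt
      have h0 : sFe ε 0 = 0 := by simp [sFe]
      rw [← h, h0]
      apply tendsto_nhdsWithin_congr (f := fun x => spsi x ^ (-ε))
      · intro x hx; simp [sFe, not_le.mpr (mem_Ioi.mp hx)]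
      · exact tendsto_spsi_rpow hε
  · have hr2 : (0:ℝ) < r ^ 2 := by positivity
    have c1 : ContinuousAt (fun x : ℝ => Real.log (x ^ 2)) r :=
      ContinuousAt.log (continuous_pow 2).continuousAt (ne_of_gt hr2)
    have c2 : ContinuousAt (fun x : ℝ => 1 - Real.log (x ^ 2)) r :=
      continuousAt_const.sub c1
    have c3 : ContinuousAt spsi r :=
      continuousAt_const.add (c2.log (ne_of_gt (one_sub_log_pos h hr.2)))
    have c4 : ContinuousAt (fun x => spsi x ^ (-ε)) r :=
      c3.rpow_const (Or.inl (ne_of_gt (spsi_pos h hr.2)))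
    have heq : sFe ε =ᶠ[nhds r] fun x => spsi x ^ (-ε) := by
      filter_upwards [Ioi_mem_nhds h] with x hx
      simp [sFe, not_le.mpr (mem_Ioi.mp hx)]
    exact (c4.congr heq.symm).continuousWithinAt

lemma intervalIntegrable_sDe {ε b : ℝ} (hε : 0 < ε) (hb0 : 0 < b) (hb1 : b ≤ 1) :
    IntervalIntegrable (sDe ε) volume 0 b := by
  apply intervalIntegrable_deriv_of_nonneg (g := sFe ε)
  · rw [uIcc_of_le hb0.le]
    exact (continuousOn_sFe hε).mono (Icc_subset_Icc le_rfl hb1)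
  · rw [min_eq_left hb0.le, max_eq_right hb0.le]
    intro x hx
    exact hasDerivAt_sFe hx.1 (hx.2.le.trans hb1)
  · rw [min_eq_left hb0.le, max_eq_right hb0.le]
    intro x hx
    exact sDe_nonneg hε.le hx.1.le (hx.2.le.trans hb1)

lemma integral_sDe {ε b : ℝ} (hε : 0 < ε) (hb0 : 0 < b) (hb1 : b ≤ 1) :
    ∫ r in (0:ℝ)..b, sDe ε r = sFe ε b := by
  have h := integral_eq_sub_of_hasDeriv_right_of_le hb0.le
    ((continuousOn_sFe hε).mono (Icc_subset_Icc le_rfl hb1))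
    (fun x hx => (hasDerivAt_sFe hx.1 (hx.2.le.trans hb1)).hasDerivWithinAt)
    (intervalIntegrable_sDe hε hb0 hb1)
  rw [h]
  simp [sFe]

theorem stmt10 (g : ℝ → ℝ) (hg : ContinuousOn g (Set.Icc 0 1)) :
    Filter.Tendsto
      (fun ε : ℝ => ε * ∫ r in (0:ℝ)..1,
        2 * g r / (r * (1 - Real.log (r ^ 2)) * (1 + Real.log (1 - Real.log (r ^ 2))) ^ (1 + ε)))
      (nhdsWithin 0 (Set.Ioi 0)) (nhds (g 0)) := by
  obtain ⟨C, hC⟩ := isCompact_Icc.exists_bound_of_continuousOn hg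
  set M := max C 1 with hMdef
  have hM1 : (1:ℝ) ≤ M := le_max_right _ _
  have hM0 : (0:ℝ) < M := lt_of_lt_of_le one_pos hM1
  have hgM : ∀ x ∈ Icc (0:ℝ) 1, |g x| ≤ M := fun x hx => by
    have := hC x hx; rw [Real.norm_eq_abs] at this; exact this.trans (le_max_left _ _)
  rw [Metric.tendsto_nhdsWithin_nhds]
  intro η hη
  have hc0 : ContinuousWithinAt g (Icc 0 1) 0 := hg 0 ⟨le_refl _, zero_le_one⟩
  rw [Metric.continuousWithinAt_iff] at hc0
  obtain ⟨δ₀, hδ₀, hδ₀'⟩ := hc0 (η/4) (by linarith)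
  set δ := min (δ₀/2) 1 with hδdef
  have hδpos : 0 < δ := lt_min (by linarith) one_pos
  have hδ1 : δ ≤ 1 := min_le_right _ _
  have hgsmall : ∀ r ∈ Icc (0:ℝ) δ, |g r - g 0| ≤ η/4 := by
    intro r hr
    have hr1 : r ∈ Icc (0:ℝ) 1 := ⟨hr.1, hr.2.trans hδ1⟩
    have hd : dist r 0 < δ₀ := by
      rw [Real.dist_eq, sub_zero, abs_of_nonneg hr.1]
      calc r ≤ δ := hr.2
        _ ≤ δ₀/2 := min_le_left _ _
        _ < δ₀ := by linarith
    have := hδ₀' hr1 hd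
    rw [Real.dist_eq] at this
    linarith [le_of_lt this]
  set L := Real.log (spsi δ) with hLdef
  have hL : 0 ≤ L := Real.log_nonneg (spsi_ge_one hδpos hδ1)
  have hKpos : (0:ℝ) < 4 * (M * L + 1) := by nlinarith
  refine ⟨η / (4 * (M * L + 1)), div_pos hη hKpos, ?_⟩
  intro ε hε hεd
  have hε0 : 0 < ε := mem_Ioi.mp hε
  have hεd' : ε * (4 * (M * L + 1)) < η := by
    rw [Real.dist_eq, sub_zero, abs_of_pos hε0] at hεd
    exact (lt_div_iff₀ hKpos).mp hεd
  -- rewrite the function value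
  have key : ε * (∫ r in (0:ℝ)..1,
      2 * g r / (r * (1 - Real.log (r ^ 2)) * (1 + Real.log (1 - Real.log (r ^ 2))) ^ (1 + ε)))
      = ∫ r in (0:ℝ)..1, g r * sDe ε r := by
    rw [← smul_eq_mul, ← intervalIntegral.integral_smul]
    apply intervalIntegral.integral_congr
    intro x _
    simp only [smul_eq_mul, sDe, spsi]
    ring
  -- integrability
  have hII1 : IntervalIntegrable (sDe ε) volume 0 1 := intervalIntegrable_sDe hε0 one_pos le_rfl
  have hIIδ : IntervalIntegrable (sDe ε) volume 0 δ := intervalIntegrable_sDe hε0 hδpos hδ1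
  have hIIδ1 : IntervalIntegrable (sDe ε) volume δ 1 := by
    apply hII1.mono_set
    rw [uIcc_of_le hδ1, uIcc_of_le zero_le_one]
    exact Icc_subset_Icc hδpos.le le_rfl
  have hIDe : IntegrableOn (sDe ε) (Ioc 0 1) volume :=
    (intervalIntegrable_iff_integrableOn_Ioc_of_le zero_le_one).mp hII1
  have hgmeas : AEStronglyMeasurable (fun r => g r * sDe ε r) (volume.restrict (Ioc 0 1)) :=
    ((hg.mono Ioc_subset_Icc_self).mul continuousOn_sDe).aestronglyMeasurable measurableSet_Ioc
  have hgDeInt : IntegrableOn (fun r => g r * sDe ε r) (Ioc 0 1) := by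
    apply Integrable.mono' (hIDe.const_mul M) hgmeas
    rw [ae_restrict_iff' measurableSet_Ioc]
    filter_upwards with x hx
    have hDnn := sDe_nonneg hε0.le hx.1.le hx.2
    rw [Real.norm_eq_abs, abs_mul, abs_of_nonneg hDnn]
    exact mul_le_mul_of_nonneg_right (hgM x ⟨hx.1.le, hx.2⟩) hDnn
  have hIIg1 : IntervalIntegrable (fun r => g r * sDe ε r) volume 0 1 :=
    (intervalIntegrable_iff_integrableOn_Ioc_of_le zero_le_one).mpr hgDeInt
  -- the error function
  set e : ℝ → ℝ := fun r => (g r - g 0) * sDe ε r with hedef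
  have he_eq : e = fun r => g r * sDe ε r - g 0 * sDe ε r := funext fun r => by
    simp only [hedef]; ring
  have hIIe1 : IntervalIntegrable e volume 0 1 := by
    rw [he_eq]; exact hIIg1.sub (hII1.const_mul (g 0))
  have hIIeδ : IntervalIntegrable e volume 0 δ := by
    apply hIIe1.mono_set
    rw [uIcc_of_le hδpos.le, uIcc_of_le zero_le_one]
    exact Icc_subset_Icc le_rfl hδ1
  have hIIeδ1 : IntervalIntegrable e volume δ 1 := by
    apply hIIe1.mono_set
    rw [uIcc_of_le hδ1, uIcc_of_le zero_le_one]
    exact Icc_subset_Icc hδpos.le le_rfl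
  -- mass identities
  have hmass1 : ∫ r in (0:ℝ)..1, sDe ε r = 1 := by
    rw [integral_sDe hε0 one_pos le_rfl]
    norm_num [sFe, spsi, Real.log_one, Real.one_rpow]
  have hmassδ : ∫ r in (0:ℝ)..δ, sDe ε r = sFe ε δ := integral_sDe hε0 hδpos hδ1
  have hmassδ1 : ∫ r in δ..1, sDe ε r = 1 - sFe ε δ := by
    have h := intervalIntegral.integral_add_adjacent_intervals hIIδ hIIδ1
    rw [hmassδ, hmass1] at h
    linarith
  -- Fe facts
  have hFeδ : sFe ε δ = spsi δ ^ (-ε) := by simp [sFe, not_le.mpr hδpos]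
  have hFeδ0 : 0 ≤ sFe ε δ := by rw [hFeδ]; exact Real.rpow_nonneg (spsi_pos hδpos hδ1).le _
  have hFeδ1 : sFe ε δ ≤ 1 := by
    rw [hFeδ]
    exact Real.rpow_le_one_of_one_le_of_nonpos (spsi_ge_one hδpos hδ1) (by linarith)
  have hFetail : 1 - sFe ε δ ≤ ε * L := by
    rw [hFeδ, Real.rpow_def_of_pos (spsi_pos hδpos hδ1), ← hLdef]
    have := Real.add_one_le_exp (L * (-ε))
    nlinarith
  -- decomposition and bounds
  have hdecomp : (∫ r in (0:ℝ)..1, g r * sDe ε r) - g 0 = ∫ r in (0:ℝ)..1, e r := by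
    rw [he_eq, intervalIntegral.integral_sub hIIg1 (hII1.const_mul (g 0)),
      intervalIntegral.integral_const_mul, hmass1]
    ring
  have hsplit : ∫ r in (0:ℝ)..1, e r = (∫ r in (0:ℝ)..δ, e r) + ∫ r in δ..1, e r :=
    (intervalIntegral.integral_add_adjacent_intervals hIIeδ hIIeδ1).symm
  have hA : |∫ r in (0:ℝ)..δ, e r| ≤ η/4 := by
    calc |∫ r in (0:ℝ)..δ, e r| ≤ ∫ r in (0:ℝ)..δ, |e r| :=
          intervalIntegral.abs_integral_le_integral_abs hδpos.le
      _ ≤ ∫ r in (0:ℝ)..δ, (η/4) * sDe ε r := by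
          apply intervalIntegral.integral_mono_on hδpos.le hIIeδ.abs (hIIδ.const_mul _)
          intro x hx
          have hDnn := sDe_nonneg hε0.le hx.1 (hx.2.trans hδ1)
          rw [hedef, abs_mul, abs_of_nonneg hDnn]
          exact mul_le_mul_of_nonneg_right (hgsmall x hx) hDnn
      _ = (η/4) * sFe ε δ := by rw [intervalIntegral.integral_const_mul, hmassδ]
      _ ≤ η/4 := by nlinarith
  have hB : |∫ r in δ..1, e r| ≤ 2 * M * (ε * L) := by
    calc |∫ r in δ..1, e r| ≤ ∫ r in δ..1, |e r| :=
          intervalIntegral.abs_integral_le_integral_abs hδ1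
      _ ≤ ∫ r in δ..1, (2*M) * sDe ε r := by
          apply intervalIntegral.integral_mono_on hδ1 hIIeδ1.abs (hIIδ1.const_mul _)
          intro x hx
          have hx01 : x ∈ Icc (0:ℝ) 1 := ⟨hδpos.le.trans hx.1, hx.2⟩
          have hDnn := sDe_nonneg hε0.le hx01.1 hx01.2
          rw [hedef, abs_mul, abs_of_nonneg hDnn]
          apply mul_le_mul_of_nonneg_right _ hDnn
          have h1 := hgM x hx01
          have h2 := hgM 0 ⟨le_rfl, zero_le_one⟩
          calc |g x - g 0| ≤ |g x| + |g 0| := abs_sub _ _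
            _ ≤ 2 * M := by linarith
      _ = (2*M) * (1 - sFe ε δ) := by rw [intervalIntegral.integral_const_mul, hmassδ1]
      _ ≤ 2 * M * (ε * L) := by nlinarith
  rw [Real.dist_eq, key, hdecomp, hsplit]
  calc |(∫ r in (0:ℝ)..δ, e r) + ∫ r in δ..1, e r|
      ≤ |∫ r in (0:ℝ)..δ, e r| + |∫ r in δ..1, e r| := abs_add_le _ _
    _ ≤ η/4 + 2 * M * (ε * L) := add_le_add hA hB
    _ < η := by nlinarith
end

section
/- For $b \geq 1$ and $\varepsilon > 0$, define $F(\varepsilon) := \varepsilon \int_{1}^{\infty} \frac{u - 1}{u^{2}\, (b + \log u)^{1+\varepsilon}}\, du$. Then: (i) the integral converges for every $\varepsilon > 0$; (ii) $F(\varepsilon) = b^{-\varepsilon} - \varepsilon \int_{1}^{\infty} \frac{du}{u^{2}(b + \log u)^{1+\varepsilon}}$; (iii) $\lim_{\varepsilon \to 0^{+}} F(\varepsilon) = 1$; and (iv) $F(\varepsilon) \leq 1$ for all $\varepsilon > 0$. -/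
open Real MeasureTheory Set Filter
open Topology

lemma stmt12_key (b : ℝ) (hb : 1 ≤ b) (ε : ℝ) (hε : 0 < ε) :
    IntegrableOn (fun u : ℝ => (u - 1) / (u ^ 2 * (b + Real.log u) ^ (1 + ε))) (Set.Ioi 1) ∧
    IntegrableOn (fun u : ℝ => 1 / (u ^ 2 * (b + Real.log u) ^ (1 + ε))) (Set.Ioi 1) ∧
    ε * ∫ u in Set.Ioi (1:ℝ), (u - 1) / (u ^ 2 * (b + Real.log u) ^ (1 + ε)) =
      b ^ (-ε) - ε * ∫ u in Set.Ioi (1:ℝ), 1 / (u ^ 2 * (b + Real.log u) ^ (1 + ε)) ∧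
    0 ≤ ∫ u in Set.Ioi (1:ℝ), 1 / (u ^ 2 * (b + Real.log u) ^ (1 + ε)) ∧
    (∫ u in Set.Ioi (1:ℝ), 1 / (u ^ 2 * (b + Real.log u) ^ (1 + ε))) ≤ 1 := by
  have hb0 : (0:ℝ) < b := lt_of_lt_of_le one_pos hb
  set h : ℝ → ℝ := fun u => u⁻¹ * (b + Real.log u) ^ (-(1 + ε)) with hh
  -- positivity of b + log u on Ici 1
  have hbl : ∀ u : ℝ, 1 ≤ u → 0 < b + Real.log u := by
    intro u hu
    have := Real.log_nonneg hu
    linarith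
  -- derivative
  have hderiv : ∀ u ∈ Set.Ici (1:ℝ),
      HasDerivAt (fun u : ℝ => -(ε⁻¹) * (b + Real.log u) ^ (-ε)) (h u) u := by
    intro u hu
    have hu1 : (1:ℝ) ≤ u := hu
    have hu0 : (0:ℝ) < u := lt_of_lt_of_le one_pos hu1
    have hblu : 0 < b + Real.log u := hbl u hu1
    have h1 : HasDerivAt (fun u : ℝ => b + Real.log u) u⁻¹ u :=
      (Real.hasDerivAt_log hu0.ne').const_add b
    have h2 : HasDerivAt (fun x : ℝ => x ^ (-ε))
        (-ε * (b + Real.log u) ^ (-ε - 1)) (b + Real.log u) :=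
      Real.hasDerivAt_rpow_const (Or.inl hblu.ne')
    have h3 := (h2.comp u h1).const_mul (-(ε⁻¹))
    convert h3 using 1
    · rfl
    · rfl
    · rfl
    have he : -ε - 1 = -(1 + ε) := by ring
    rw [hh]
    simp only [he]
    field_simp
  have hderiv' : ∀ u ∈ Set.Ioi (1:ℝ),
      HasDerivAt (fun u : ℝ => -(ε⁻¹) * (b + Real.log u) ^ (-ε)) (h u) u :=
    fun u hu => hderiv u (Set.mem_Ici.mpr (le_of_lt hu))
  have hcontG : ContinuousWithinAt (fun u : ℝ => -(ε⁻¹) * (b + Real.log u) ^ (-ε))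
      (Set.Ici 1) 1 :=
    (hderiv 1 self_mem_Ici).continuousAt.continuousWithinAt
  have hpos : ∀ u ∈ Set.Ioi (1:ℝ), 0 ≤ h u := by
    intro u hu
    have hu0 : (0:ℝ) < u := lt_trans one_pos hu
    have hblu : 0 < b + Real.log u := hbl u (le_of_lt hu)
    have := Real.rpow_nonneg hblu.le (-(1 + ε))
    positivity
  have htends : Tendsto (fun u : ℝ => -(ε⁻¹) * (b + Real.log u) ^ (-ε)) atTop (𝓝 0) := by
    have h1 : Tendsto (fun u : ℝ => b + Real.log u) atTop atTop :=
      tendsto_atTop_add_const_left _ b Real.tendsto_log_atTop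
    have h2 : Tendsto (fun u : ℝ => (b + Real.log u) ^ (-ε)) atTop (𝓝 0) :=
      (tendsto_rpow_neg_atTop hε).comp h1
    have := h2.const_mul (-(ε⁻¹))
    simpa using this
  have h_int : IntegrableOn h (Set.Ioi 1) :=
    integrableOn_Ioi_deriv_of_nonneg hcontG hderiv' hpos htends
  have h_val : ∫ u in Set.Ioi (1:ℝ), h u = ε⁻¹ * b ^ (-ε) := by
    rw [integral_Ioi_of_hasDerivAt_of_tendsto hcontG hderiv' h_int htends]
    simp [Real.log_one]
  -- continuity / measurability of the integrands
  have hcden : ContinuousOn (fun u : ℝ => u ^ 2 * (b + Real.log u) ^ (1 + ε)) (Set.Ioi 1) := by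
    apply ContinuousOn.mul (continuous_pow 2).continuousOn
    apply ContinuousOn.rpow_const
    · exact continuousOn_const.add (Real.continuousOn_log.mono (fun u hu => by
        simp only [mem_compl_iff, mem_singleton_iff]
        exact (lt_trans one_pos hu).ne'))
    · intro u hu
      exact Or.inl (hbl u (le_of_lt hu)).ne'
  have hden_ne : ∀ u ∈ Set.Ioi (1:ℝ), u ^ 2 * (b + Real.log u) ^ (1 + ε) ≠ 0 := by
    intro u hu
    have hu0 : (0:ℝ) < u := lt_trans one_pos hu
    have hblu : 0 < b + Real.log u := hbl u (le_of_lt hu)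
    have := Real.rpow_pos_of_pos hblu (1 + ε)
    positivity
  have hf2cont : ContinuousOn (fun u : ℝ => 1 / (u ^ 2 * (b + Real.log u) ^ (1 + ε)))
      (Set.Ioi 1) := continuousOn_const.div hcden hden_ne
  have hf1cont : ContinuousOn (fun u : ℝ => (u - 1) / (u ^ 2 * (b + Real.log u) ^ (1 + ε)))
      (Set.Ioi 1) :=
    ((continuous_id.sub continuous_const).continuousOn).div hcden hden_ne
  have hf2_nonneg : ∀ u ∈ Set.Ioi (1:ℝ),
      0 ≤ 1 / (u ^ 2 * (b + Real.log u) ^ (1 + ε)) := by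
    intro u hu
    have hu0 : (0:ℝ) < u := lt_trans one_pos hu
    have hblu : 0 < b + Real.log u := hbl u (le_of_lt hu)
    have := Real.rpow_pos_of_pos hblu (1 + ε)
    positivity
  have hf2_le : ∀ u ∈ Set.Ioi (1:ℝ),
      1 / (u ^ 2 * (b + Real.log u) ^ (1 + ε)) ≤ h u := by
    intro u hu
    have hu1 : (1:ℝ) < u := hu
    have hu0 : (0:ℝ) < u := lt_trans one_pos hu1
    have hblu : 0 < b + Real.log u := hbl u (le_of_lt hu)
    have hD : 0 < (b + Real.log u) ^ (1 + ε) := Real.rpow_pos_of_pos hblu _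
    rw [hh]
    simp only [Real.rpow_neg hblu.le, one_div, mul_inv]
    gcongr
    nlinarith
  have int_f2 : IntegrableOn (fun u : ℝ => 1 / (u ^ 2 * (b + Real.log u) ^ (1 + ε)))
      (Set.Ioi 1) := by
    apply h_int.mono' (hf2cont.aestronglyMeasurable measurableSet_Ioi)
    filter_upwards [ae_restrict_mem measurableSet_Ioi] with u hu
    rw [Real.norm_eq_abs, abs_of_nonneg (hf2_nonneg u hu)]
    exact hf2_le u hu
  -- f1 = h - f2 on Ioi 1
  have heq : ∀ u ∈ Set.Ioi (1:ℝ),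
      h u - 1 / (u ^ 2 * (b + Real.log u) ^ (1 + ε)) =
        (u - 1) / (u ^ 2 * (b + Real.log u) ^ (1 + ε)) := by
    intro u hu
    have hu0 : (0:ℝ) < u := lt_trans one_pos hu
    have hblu : 0 < b + Real.log u := hbl u (le_of_lt hu)
    have hD : 0 < (b + Real.log u) ^ (1 + ε) := Real.rpow_pos_of_pos hblu _
    rw [hh]
    simp only [Real.rpow_neg hblu.le]
    field_simp
  have int_f1 : IntegrableOn (fun u : ℝ => (u - 1) / (u ^ 2 * (b + Real.log u) ^ (1 + ε)))
      (Set.Ioi 1) :=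
    IntegrableOn.congr_fun (h_int.sub int_f2) (fun u hu => heq u hu) measurableSet_Ioi
  have hval : ∫ u in Set.Ioi (1:ℝ), (u - 1) / (u ^ 2 * (b + Real.log u) ^ (1 + ε)) =
      ε⁻¹ * b ^ (-ε) - ∫ u in Set.Ioi (1:ℝ), 1 / (u ^ 2 * (b + Real.log u) ^ (1 + ε)) := by
    rw [← h_val, ← integral_sub h_int int_f2]
    exact (setIntegral_congr_fun measurableSet_Ioi heq).symm
  have hnn : 0 ≤ ∫ u in Set.Ioi (1:ℝ), 1 / (u ^ 2 * (b + Real.log u) ^ (1 + ε)) :=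
    setIntegral_nonneg measurableSet_Ioi hf2_nonneg
  have hle1 : (∫ u in Set.Ioi (1:ℝ), 1 / (u ^ 2 * (b + Real.log u) ^ (1 + ε))) ≤ 1 := by
    have hg : IntegrableOn (fun x : ℝ => x ^ (-2 : ℝ)) (Set.Ioi 1) :=
      integrableOn_Ioi_rpow_of_lt (by norm_num) one_pos
    have hmono : ∀ u ∈ Set.Ioi (1:ℝ),
        1 / (u ^ 2 * (b + Real.log u) ^ (1 + ε)) ≤ u ^ (-2 : ℝ) := by
      intro u hu
      have hu1 : (1:ℝ) < u := hu
      have hu0 : (0:ℝ) < u := lt_trans one_pos hu1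
      have hblu : 1 ≤ b + Real.log u := by
        have := Real.log_nonneg hu1.le; linarith
      have hD1 : 1 ≤ (b + Real.log u) ^ (1 + ε) :=
        Real.one_le_rpow hblu (by linarith)
      have hu2 : (0:ℝ) < u ^ 2 := by positivity
      rw [show (-2:ℝ) = -((2:ℕ):ℝ) by norm_num, Real.rpow_neg hu0.le, Real.rpow_natCast,
        one_div]
      rw [mul_inv]
      calc (u ^ 2)⁻¹ * ((b + Real.log u) ^ (1 + ε))⁻¹
          ≤ (u ^ 2)⁻¹ * 1 := by
            apply mul_le_mul_of_nonneg_left _ (by positivity)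
            exact inv_le_one_of_one_le₀ hD1
        _ = (u ^ 2)⁻¹ := by ring
    calc (∫ u in Set.Ioi (1:ℝ), 1 / (u ^ 2 * (b + Real.log u) ^ (1 + ε)))
        ≤ ∫ u in Set.Ioi (1:ℝ), u ^ (-2 : ℝ) :=
          setIntegral_mono_on int_f2 hg measurableSet_Ioi hmono
      _ = 1 := by
          rw [integral_Ioi_rpow_of_lt (by norm_num) one_pos]
          norm_num
  refine ⟨int_f1, int_f2, ?_, hnn, hle1⟩
  rw [hval, mul_sub, ← mul_assoc, mul_inv_cancel₀ hε.ne', one_mul]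

theorem stmt12 (b : ℝ) (hb : 1 ≤ b) :
    (∀ ε : ℝ, 0 < ε →
      IntegrableOn (fun u : ℝ => (u - 1) / (u ^ 2 * (b + Real.log u) ^ (1 + ε))) (Set.Ioi 1)) ∧
    (∀ ε : ℝ, 0 < ε →
      ε * ∫ u in Set.Ioi (1:ℝ), (u - 1) / (u ^ 2 * (b + Real.log u) ^ (1 + ε)) =
        b ^ (-ε) - ε * ∫ u in Set.Ioi (1:ℝ), 1 / (u ^ 2 * (b + Real.log u) ^ (1 + ε))) ∧
    Filter.Tendsto
      (fun ε : ℝ => ε * ∫ u in Set.Ioi (1:ℝ), (u - 1) / (u ^ 2 * (b + Real.log u) ^ (1 + ε)))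
      (nhdsWithin 0 (Set.Ioi 0)) (nhds 1) ∧
    (∀ ε : ℝ, 0 < ε →
      ε * ∫ u in Set.Ioi (1:ℝ), (u - 1) / (u ^ 2 * (b + Real.log u) ^ (1 + ε)) ≤ 1) := by
  have hb0 : (0:ℝ) < b := lt_of_lt_of_le one_pos hb
  refine ⟨fun ε hε => (stmt12_key b hb ε hε).1, fun ε hε => (stmt12_key b hb ε hε).2.2.1, ?_, ?_⟩
  · -- limit
    have h1 : Tendsto (fun ε : ℝ => b ^ (-ε)) (nhdsWithin 0 (Set.Ioi 0)) (𝓝 1) := by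
      have hcont : Continuous fun ε : ℝ => b ^ (-ε) := by
        simp only [Real.rpow_def_of_pos hb0]
        exact Real.continuous_exp.comp (continuous_const.mul continuous_neg)
      have := hcont.tendsto 0
      simp only [neg_zero, Real.rpow_zero] at this
      exact this.mono_left nhdsWithin_le_nhds
    have h2 : Tendsto (fun ε : ℝ =>
        ε * ∫ u in Set.Ioi (1:ℝ), 1 / (u ^ 2 * (b + Real.log u) ^ (1 + ε)))
        (nhdsWithin 0 (Set.Ioi 0)) (𝓝 0) := by
      apply squeeze_zero'
      · filter_upwards [self_mem_nhdsWithin] with ε hε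
        exact mul_nonneg (le_of_lt hε) (stmt12_key b hb ε hε).2.2.2.1
      · filter_upwards [self_mem_nhdsWithin] with ε hε
        calc ε * ∫ u in Set.Ioi (1:ℝ), 1 / (u ^ 2 * (b + Real.log u) ^ (1 + ε))
            ≤ ε * 1 := by
              have := (stmt12_key b hb ε hε).2.2.2.2
              exact mul_le_mul_of_nonneg_left this (le_of_lt hε)
          _ = ε := mul_one ε
      · exact tendsto_id.mono_left nhdsWithin_le_nhds
    have h3 := h1.sub h2
    rw [sub_zero] at h3
    apply h3.congr'
    filter_upwards [self_mem_nhdsWithin] with ε hε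
    exact ((stmt12_key b hb ε hε).2.2.1).symm
  · intro ε hε
    rw [(stmt12_key b hb ε hε).2.2.1]
    have h1 : b ^ (-ε) ≤ 1 :=
      Real.rpow_le_one_of_one_le_of_nonpos hb (neg_nonpos.2 hε.le)
    have h2 : 0 ≤ ε * ∫ u in Set.Ioi (1:ℝ), 1 / (u ^ 2 * (b + Real.log u) ^ (1 + ε)) :=
      mul_nonneg hε.le (stmt12_key b hb ε hε).2.2.2.1
    linarith
end
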